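/- arXiv:2006.09646 — 8 statements merged into one kernel-verified Lean document; each statement's English description precedes it below -/
import Mathlib

section
/- Suppose there exists a deterministic policy d : S → A such that, identifying d with the stochastic policy μ_d, one has q^{μ_d}_{|S|}(s) > 0 for every s ∈ S. Then for every stochastic policy μ with μ(a|s) > 0 for all a ∈ A and s ∈ S, one has q^{μ}_{|S|}(s) > 0 for every s ∈ S; i.e., every strictly positive stochastic policy reaches the termination state δ within |S| steps with positive probability from every state. -/
/-- Probability of reaching the termination state `δ` within `k` steps starting
from a given state, under stochastic policy `μ` and transition kernel `p`. -/
noncomputable def reach {S A : Type*} [Fintype S] [Fintype A] [DecidableEq S]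
    (p : S → A → S → ℝ) (μ : S → A → ℝ) (δ : S) : ℕ → S → ℝ
  | 0 => fun s => if s = δ then 1 else 0
  | (k + 1) => fun s =>
      if s = δ then 1 else ∑ a, ∑ s', μ s a * p s a s' * reach p μ δ k s'

lemma reach_nonneg {S A : Type*} [Fintype S] [Fintype A] [DecidableEq S]
    (p : S → A → S → ℝ) (μ : S → A → ℝ) (δ : S)
    (hp0 : ∀ s a s', 0 ≤ p s a s') (hμ0 : ∀ s a, 0 ≤ μ s a) :
    ∀ k s, 0 ≤ reach p μ δ k s := by
  intro k
  induction k with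
  | zero => intro s; simp only [reach]; split <;> norm_num
  | succ k ih =>
    intro s
    simp only [reach]
    split
    · norm_num
    · refine Finset.sum_nonneg fun a _ => Finset.sum_nonneg fun s' _ => ?_
      exact mul_nonneg (mul_nonneg (hμ0 s a) (hp0 s a s')) (ih s')

/-- If some deterministic policy reaches the termination state `δ` within `|S|` steps
with positive probability from every state, then every strictly positive stochastic
policy does so as well. -/
theorem every_positive_policy_is_proper
    {S A : Type*} [Fintype S] [Fintype A] [DecidableEq S] [DecidableEq A]
    [Nonempty S] [Nonempty A]
    (p : S → A → S → ℝ)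
    (hp0 : ∀ s a s', 0 ≤ p s a s')
    (hp1 : ∀ s a, ∑ s', p s a s' = 1)
    (δ : S) (d : S → A)
    (hd : ∀ s, 0 < reach p (fun s a => if a = d s then (1 : ℝ) else 0) δ (Fintype.card S) s)
    (μ : S → A → ℝ)
    (hμpos : ∀ s a, 0 < μ s a)
    (hμ1 : ∀ s, ∑ a, μ s a = 1) :
    ∀ s, 0 < reach p μ δ (Fintype.card S) s := by
  set ν : S → A → ℝ := fun s a => if a = d s then (1 : ℝ) else 0 with hν
  have hν0 : ∀ s a, 0 ≤ ν s a := by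
    intro s a; simp only [hν]; split <;> norm_num
  have hνnn := reach_nonneg p ν δ hp0 hν0
  have hμnn := reach_nonneg p μ δ hp0 (fun s a => (hμpos s a).le)
  have key : ∀ k s, 0 < reach p ν δ k s → 0 < reach p μ δ k s := by
    intro k
    induction k with
    | zero => intro s h; simpa [reach] using h
    | succ k ih =>
      intro s h
      by_cases hs : s = δ
      · simp [reach, hs]
      · simp only [reach, if_neg hs] at h ⊢
        -- get a positive term in the ν sum
        by_contra hcon
        push_neg at hcon
        have hall : ∀ a ∈ Finset.univ (α := A), ∀ s' ∈ Finset.univ (α := S),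
            ν s a * p s a s' * reach p ν δ k s' ≤ 0 := by
          intro a _ s' _
          by_contra hpos
          push_neg at hpos
          have hνp : 0 < ν s a := by
            rcases lt_or_eq_of_le (hν0 s a) with h' | h'
            · exact h'
            · exfalso; rw [← h'] at hpos; simpa using hpos
          have hpp : 0 < p s a s' := by
            rcases lt_or_eq_of_le (hp0 s a s') with h' | h'
            · exact h'
            · exfalso; rw [← h'] at hpos; simpa using hpos
          have hrp : 0 < reach p ν δ k s' := by
            rcases lt_or_eq_of_le (hνnn k s') with h' | h'
            · exact h'
            · exfalso; rw [← h'] at hpos; simpa using hpos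
          have hterm : 0 < μ s a * p s a s' * reach p μ δ k s' :=
            mul_pos (mul_pos (hμpos s a) hpp) (ih s' hrp)
          have hsum : 0 < ∑ a, ∑ s', μ s a * p s a s' * reach p μ δ k s' := by
            have : 0 < ∑ s', μ s a * p s a s' * reach p μ δ k s' :=
              Finset.sum_pos' (fun s'' _ =>
                mul_nonneg (mul_nonneg (hμpos s a).le (hp0 s a s'')) (hμnn k s''))
                ⟨s', Finset.mem_univ s', hterm⟩
            exact Finset.sum_pos' (fun a' _ => Finset.sum_nonneg fun s'' _ =>
                mul_nonneg (mul_nonneg (hμpos s a').le (hp0 s a' s'')) (hμnn k s''))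
              ⟨a, Finset.mem_univ a, this⟩
          exact absurd hsum (not_lt.mpr hcon)
        have : (∑ a, ∑ s', ν s a * p s a s' * reach p ν δ k s') ≤ 0 :=
          Finset.sum_nonpos fun a ha => Finset.sum_nonpos fun s' hs' => hall a ha s' hs'
        exact absurd h (not_lt.mpr this)
  exact fun s => key (Fintype.card S) s (hd s)
end

section
/- Let A be a nonempty finite set, τ > 0, and x, y : A → ℝ. Define the soft-min softmin_τ(x) = −τ log Σ_{a∈A} exp(−x(a)/τ) and the Gibbs distribution π_x(a) = exp(−x(a)/τ)/Σ_{a'∈A} exp(−x(a')/τ). Then Σ_{a∈A} π_x(a)(x(a) − y(a)) ≤ softmin_τ(x) − softmin_τ(y) ≤ Σ_{a∈A} π_y(a)(x(a) − y(a)). -/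
/-!
Both bounds are instances of one inequality: `log ∑ exp` is convex and its gradient at `f` is
the Gibbs distribution of `f`, so it lies above its tangent plane at `f`. Concretely, Jensen's
inequality for `exp` with the Gibbs weights of `f` gives
`∑ π_f (g - f) ≤ log ∑ exp g - log ∑ exp f`; scaling by `-τ` with `f = -y/τ`, `g = -x/τ` gives the
upper bound, and exchanging `x` and `y` the lower one.
-/

open Finset Real

theorem sum_exp_div_mul_sub_le_log_sum_exp_sub {ι : Type*} {s : Finset ι} (hs : s.Nonempty)
    (f g : ι → ℝ) :
    ∑ i ∈ s, exp (f i) / (∑ j ∈ s, exp (f j)) * (g i - f i) ≤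
      log (∑ i ∈ s, exp (g i)) - log (∑ i ∈ s, exp (f i)) := by
  set S := ∑ j ∈ s, exp (f j)
  have hS : 0 < S := sum_pos (fun i _ ↦ exp_pos (f i)) hs
  have hT : 0 < ∑ i ∈ s, exp (g i) := sum_pos (fun i _ ↦ exp_pos (g i)) hs
  have hweights : ∑ i ∈ s, exp (f i) / S = 1 := by rw [← sum_div, div_self hS.ne']
  have hjensen := convexOn_exp.map_sum_le (t := s) (w := fun i ↦ exp (f i) / S)
    (p := fun i ↦ g i - f i) (fun i _ ↦ by positivity) hweights (fun i _ ↦ Set.mem_univ _)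
  have hreweight : ∑ i ∈ s, (exp (f i) / S) • exp (g i - f i) = (∑ i ∈ s, exp (g i)) / S := by
    rw [sum_div]
    refine sum_congr rfl fun i _ ↦ ?_
    rw [smul_eq_mul, exp_sub]
    field_simp
  rw [← log_div hT.ne' hS.ne', le_log_iff_exp_le (div_pos hT hS), ← hreweight]
  simpa only [smul_eq_mul] using hjensen

theorem softmin_sub_softmin_le {A : Type*} [Fintype A] [Nonempty A] {τ : ℝ} (hτ : 0 < τ)
    (x y : A → ℝ) :
    -τ * log (∑ a, exp (-x a / τ)) - -τ * log (∑ a, exp (-y a / τ)) ≤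
      ∑ a, exp (-y a / τ) / (∑ a', exp (-y a' / τ)) * (x a - y a) := by
  have h := sum_exp_div_mul_sub_le_log_sum_exp_sub univ_nonempty
    (fun a ↦ -y a / τ) (fun a ↦ -x a / τ)
  have hscale : ∑ a, exp (-y a / τ) / (∑ a', exp (-y a' / τ)) * (-x a / τ - -y a / τ) =
      -(∑ a, exp (-y a / τ) / (∑ a', exp (-y a' / τ)) * (x a - y a)) / τ := by
    rw [← sum_neg_distrib, sum_div]
    refine sum_congr rfl fun a _ ↦ ?_
    ring
  rw [hscale, div_le_iff₀ hτ] at h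
  linarith

/-- Two-sided bound on differences of soft-mins: with
`softmin_τ(x) = −τ log Σ exp(−x(a)/τ)` and Gibbs distribution
`π_x(a) = exp(−x(a)/τ)/Σ exp(−x(a')/τ)`, we have
`Σ π_x(a)(x(a)−y(a)) ≤ softmin_τ(x) − softmin_τ(y) ≤ Σ π_y(a)(x(a)−y(a))`. -/
theorem softmin_diff_bounds
    {A : Type*} [Fintype A] [Nonempty A]
    (τ : ℝ) (hτ : 0 < τ) (x y : A → ℝ) :
    (∑ a, (Real.exp (-x a / τ) / ∑ a', Real.exp (-x a' / τ)) * (x a - y a)) ≤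
        (-τ * Real.log (∑ a, Real.exp (-x a / τ))) -
          (-τ * Real.log (∑ a, Real.exp (-y a / τ))) ∧
    (-τ * Real.log (∑ a, Real.exp (-x a / τ))) -
        (-τ * Real.log (∑ a, Real.exp (-y a / τ))) ≤
      ∑ a, (Real.exp (-y a / τ) / ∑ a', Real.exp (-y a' / τ)) * (x a - y a) := by
  refine ⟨?_, softmin_sub_softmin_le hτ x y⟩
  have h := softmin_sub_softmin_le hτ y x
  simp only [← neg_sub (x _) (y _), mul_neg, sum_neg_distrib] at h
  linarith
end

section
/- Suppose ξ : S → ℝ satisfies ξ_s > 0 for all s ∈ S, and λ ≥ 0 is such that Σ_{s'∈S} p(s'|s,a) ξ_{s'} ≤ λ ξ_s for all s ∈ S and a ∈ A, with γλ < 1. Then the soft Bellman operator T is a contraction with respect to the weighted maximum norm: ‖TΛ − TΛ'‖_ξ ≤ γλ ‖Λ − Λ'‖_ξ for all Λ, Λ' : S×A → ℝ. -/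
/-- The soft Bellman operator
`[TΛ](s,a) = Σ_{s'} p(s'|s,a)(c(s,a,s') + (γ/β) log p(s'|s,a))
  − (γ²/β) Σ_{s'} p(s'|s,a) log Σ_{a'} exp(−(β/γ)Λ(s',a'))`. -/
noncomputable def softBellman {S A : Type*} [Fintype S] [Fintype A]
    (p : S → A → S → ℝ) (c : S → A → S → ℝ) (β γ : ℝ)
    (Λ : S → A → ℝ) : S → A → ℝ :=
  fun s a =>
    (∑ s', p s a s' * (c s a s' + (γ / β) * Real.log (p s a s'))) -
      (γ ^ 2 / β) * ∑ s', p s a s' * Real.log (∑ a', Real.exp (-(β / γ) * Λ s' a'))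

/-- Weighted maximum norm `‖X‖_ξ = max_{s,a} |X(s,a)| / ξ(s)`. -/
noncomputable def wnorm {S A : Type*} [Fintype S] [Fintype A] [Nonempty S] [Nonempty A]
    (ξ : S → ℝ) (X : S → A → ℝ) : ℝ :=
  Finset.univ.sup' Finset.univ_nonempty (fun sa : S × A => |X sa.1 sa.2| / ξ sa.1)

/-!
The constant part of `T` cancels in `TΛ - TΛ'`, leaving `γ²/β` times a `p`-average of
differences of log-sum-exps. Log-sum-exp is 1-Lipschitz for the sup norm, so at `s'` this
difference is at most `(β/γ) · |Λ - Λ'|(s', ·) ≤ (β/γ) ‖Λ - Λ'‖_ξ ξ(s')`, and averaging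
`ξ` against `p` costs the factor `λ`.
-/

open Finset Real

namespace Real

lemma log_sum_exp_le_log_sum_exp_add {ι : Type*} [Fintype ι] [Nonempty ι]
    {u v : ι → ℝ} {M : ℝ} (h : ∀ i, u i ≤ v i + M) :
    log (∑ i, exp (u i)) ≤ log (∑ i, exp (v i)) + M := by
  have hpos : ∀ w : ι → ℝ, 0 < ∑ i, exp (w i) := fun w =>
    sum_pos (fun _ _ => exp_pos _) univ_nonempty
  have hsum : ∑ i, exp (u i) ≤ exp M * ∑ i, exp (v i) := by
    rw [mul_sum]
    gcongr with i
    rw [← exp_add]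
    exact exp_le_exp.mpr (by linarith [h i])
  calc log (∑ i, exp (u i)) ≤ log (exp M * ∑ i, exp (v i)) := log_le_log (hpos u) hsum
    _ = log (∑ i, exp (v i)) + M := by
        rw [log_mul (exp_pos M).ne' (hpos v).ne', log_exp, add_comm]

lemma abs_log_sum_exp_sub_le {ι : Type*} [Fintype ι] [Nonempty ι]
    {u v : ι → ℝ} {M : ℝ} (h : ∀ i, |u i - v i| ≤ M) :
    |log (∑ i, exp (u i)) - log (∑ i, exp (v i))| ≤ M := by
  rw [abs_sub_le_iff, sub_le_iff_le_add', sub_le_iff_le_add']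
  refine ⟨log_sum_exp_le_log_sum_exp_add fun i => ?_,
    log_sum_exp_le_log_sum_exp_add fun i => ?_⟩
  · linarith [(abs_le.mp (h i)).2]
  · linarith [(abs_le.mp (h i)).1]

end Real

section WNorm

variable {S A : Type*} [Fintype S] [Fintype A] [Nonempty S] [Nonempty A]
  {ξ : S → ℝ}

lemma abs_le_wnorm_mul (hξ : ∀ s, 0 < ξ s) (X : S → A → ℝ) (s : S) (a : A) :
    |X s a| ≤ wnorm ξ X * ξ s :=
  (div_le_iff₀ (hξ s)).mp <|
    le_sup' (fun sa : S × A => |X sa.1 sa.2| / ξ sa.1) (mem_univ (s, a))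

lemma wnorm_nonneg (hξ : ∀ s, 0 < ξ s) (X : S → A → ℝ) : 0 ≤ wnorm ξ X := by
  obtain ⟨s⟩ := ‹Nonempty S›
  obtain ⟨a⟩ := ‹Nonempty A›
  exact nonneg_of_mul_nonneg_left ((abs_nonneg _).trans (abs_le_wnorm_mul hξ X s a)) (hξ s)

lemma wnorm_le_of_abs_le (hξ : ∀ s, 0 < ξ s) {X : S → A → ℝ} {C : ℝ}
    (h : ∀ s a, |X s a| ≤ C * ξ s) :
    wnorm ξ X ≤ C :=
  sup'_le _ _ fun sa _ => (div_le_iff₀ (hξ sa.1)).mpr (h sa.1 sa.2)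

end WNorm

section SoftBellman

variable {S A : Type*} [Fintype S] [Fintype A]
  (p c : S → A → S → ℝ) (β γ : ℝ)

lemma softBellman_sub (Λ Λ' : S → A → ℝ) (s : S) (a : A) :
    softBellman p c β γ Λ s a - softBellman p c β γ Λ' s a =
      γ ^ 2 / β * ∑ s', p s a s' *
        (log (∑ a', exp (-(β / γ) * Λ' s' a')) - log (∑ a', exp (-(β / γ) * Λ s' a'))) := by
  simp only [softBellman, mul_sub, sum_sub_distrib, mul_sum]
  ring

variable {p β γ}

lemma abs_softBellman_sub_le [Nonempty A] (hp : ∀ s a s', 0 ≤ p s a s')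
    (hβ : 0 < β) (hγ : 0 < γ) {Λ Λ' : S → A → ℝ} {δ : S → ℝ}
    (hδ : ∀ s a, |Λ s a - Λ' s a| ≤ δ s) (s : S) (a : A) :
    |softBellman p c β γ Λ s a - softBellman p c β γ Λ' s a| ≤ γ * ∑ s', p s a s' * δ s' := by
  have hlse : ∀ s', |log (∑ a', exp (-(β / γ) * Λ' s' a')) -
      log (∑ a', exp (-(β / γ) * Λ s' a'))| ≤ β / γ * δ s' := fun s' =>
    abs_log_sum_exp_sub_le fun a' => by
      rw [← mul_sub, abs_mul, abs_neg, abs_of_pos (by positivity), abs_sub_comm]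
      exact mul_le_mul_of_nonneg_left (hδ s' a') (by positivity)
  rw [softBellman_sub, abs_mul, abs_of_pos (by positivity)]
  calc γ ^ 2 / β * |∑ s', p s a s' * (log (∑ a', exp (-(β / γ) * Λ' s' a')) -
          log (∑ a', exp (-(β / γ) * Λ s' a')))|
      ≤ γ ^ 2 / β * ∑ s', p s a s' * (β / γ * δ s') := by
        gcongr
        refine (abs_sum_le_sum_abs _ _).trans (sum_le_sum fun s' _ => ?_)
        rw [abs_mul, abs_of_nonneg (hp s a s')]
        exact mul_le_mul_of_nonneg_left (hlse s') (hp s a s')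
    _ = γ * ∑ s', p s a s' * δ s' := by
        rw [mul_sum, mul_sum]
        refine sum_congr rfl fun s' _ => ?_
        field_simp

end SoftBellman

theorem softBellman_contraction_wnorm_general
    {S A : Type*} [Fintype S] [Fintype A] [Nonempty S] [Nonempty A]
    (p : S → A → S → ℝ) (c : S → A → S → ℝ) (β γ : ℝ)
    (hp0 : ∀ s a s', 0 ≤ p s a s')
    (hβ : 0 < β) (hγ0 : 0 < γ)
    (ξ : S → ℝ) (hξ : ∀ s, 0 < ξ s)
    (lam : ℝ)
    (hlam : ∀ s a, ∑ s', p s a s' * ξ s' ≤ lam * ξ s)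
    (Λ Λ' : S → A → ℝ) :
    wnorm ξ (fun s a => softBellman p c β γ Λ s a - softBellman p c β γ Λ' s a) ≤
      γ * lam * wnorm ξ (fun s a => Λ s a - Λ' s a) := by
  set N := wnorm ξ (fun s a => Λ s a - Λ' s a)
  have hN : 0 ≤ N := wnorm_nonneg hξ _
  refine wnorm_le_of_abs_le hξ fun s a => ?_
  calc |softBellman p c β γ Λ s a - softBellman p c β γ Λ' s a|
      ≤ γ * ∑ s', p s a s' * (N * ξ s') :=
        abs_softBellman_sub_le c hp0 hβ hγ0 (abs_le_wnorm_mul hξ _) s a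
    _ = γ * N * ∑ s', p s a s' * ξ s' := by
        simp only [mul_sum]
        exact sum_congr rfl fun s' _ => by ring
    _ ≤ γ * N * (lam * ξ s) := by gcongr; exact hlam s a
    _ = γ * lam * N * ξ s := by ring

/-- If `ξ > 0` and `Σ_{s'} p(s'|s,a) ξ(s') ≤ λ ξ(s)` with `γλ < 1`, then the soft
Bellman operator is a contraction in the weighted maximum norm `‖·‖_ξ`. -/
theorem softBellman_contraction_wnorm
    {S A : Type*} [Fintype S] [Fintype A] [Nonempty S] [Nonempty A]
    (p : S → A → S → ℝ) (c : S → A → S → ℝ) (β γ : ℝ)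
    (hp0 : ∀ s a s', 0 ≤ p s a s') (hp1 : ∀ s a, ∑ s', p s a s' = 1)
    (hβ : 0 < β) (hγ0 : 0 < γ) (hγ1 : γ ≤ 1)
    (ξ : S → ℝ) (hξ : ∀ s, 0 < ξ s)
    (lam : ℝ) (hlam0 : 0 ≤ lam)
    (hlam : ∀ s a, ∑ s', p s a s' * ξ s' ≤ lam * ξ s)
    (hcontr : γ * lam < 1)
    (Λ Λ' : S → A → ℝ) :
    wnorm ξ (fun s a => softBellman p c β γ Λ s a - softBellman p c β γ Λ' s a) ≤
      γ * lam * wnorm ξ (fun s a => Λ s a - Λ' s a) :=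
  softBellman_contraction_wnorm_general p c β γ hp0 hβ hγ0 ξ hξ lam hlam Λ Λ'
end

section
/- Let μ be a stochastic policy with μ(a|s) > 0 and Σ_{a∈A} μ(a|s) = 1 for all s. Suppose J, H : S → ℝ satisfy the Bellman recursions J(s) = Σ_{a∈A} Σ_{s'∈S} μ(a|s) p(s'|s,a) ( c(s,a,s') + γ J(s') ) and H(s) = Σ_{a∈A} Σ_{s'∈S} μ(a|s) p(s'|s,a) ( −log p(s'|s,a) − log μ(a|s) + H(s') ), and suppose λ : S → ℝ satisfies, for all s ∈ S and a ∈ A, Σ_{s'∈S} p(s'|s,a) H(s') = Σ_{s'∈S} p(s'|s,a) log p(s'|s,a) + log μ(a|s) + λ_s + 1. Then the free-energy function V(s) = J(s) − (1/β) H(s) satisfies the recursive Bellman equation V(s) = Σ_{a∈A} Σ_{s'∈S} μ(a|s) p(s'|s,a) ( c(s,a,s') + (γ/β) log p(s'|s,a) + (γ/β) log μ(a|s) + γ V(s') ) + c₀(s), where c₀(s) = −((1−γ)/β)(λ_s + 1) does not depend on the policy μ. -/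
/-- (Theorem 1, finite-entropy case.) If `J` satisfies the value-function Bellman
recursion, `H` satisfies the Shannon-entropy Bellman recursion, and `λ : S → ℝ`
satisfies the algebraic relation
`Σ_{s'} p(s'|s,a) H(s') = Σ_{s'} p(s'|s,a) log p(s'|s,a) + log μ(a|s) + λ_s + 1`,
then the free energy `V = J − (1/β)H` satisfies the recursive Bellman equation
`V(s) = Σ_{a,s'} μ(a|s) p(s'|s,a)(c + (γ/β) log p + (γ/β) log μ + γ V(s')) + c₀(s)`
with `c₀(s) = −((1−γ)/β)(λ_s + 1)` independent of the policy `μ`. -/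
theorem free_energy_bellman_equation
    {S A : Type*} [Fintype S] [Fintype A] [Nonempty S] [Nonempty A]
    (p : S → A → S → ℝ) (c : S → A → S → ℝ) (β γ : ℝ)
    (hp0 : ∀ s a s', 0 ≤ p s a s') (hp1 : ∀ s a, ∑ s', p s a s' = 1)
    (hβ : 0 < β) (hγ0 : 0 < γ) (hγ1 : γ ≤ 1)
    (μ : S → A → ℝ) (hμpos : ∀ s a, 0 < μ s a) (hμ1 : ∀ s, ∑ a, μ s a = 1)
    (J H : S → ℝ)
    (hJ : ∀ s, J s = ∑ a, ∑ s', μ s a * p s a s' * (c s a s' + γ * J s'))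
    (hH : ∀ s, H s = ∑ a, ∑ s', μ s a * p s a s' *
      (-Real.log (p s a s') - Real.log (μ s a) + H s'))
    (lam : S → ℝ)
    (hlam : ∀ s a, ∑ s', p s a s' * H s' =
      (∑ s', p s a s' * Real.log (p s a s')) + Real.log (μ s a) + lam s + 1) :
    ∀ s, J s - (1 / β) * H s =
      (∑ a, ∑ s', μ s a * p s a s' *
        (c s a s' + (γ / β) * Real.log (p s a s') + (γ / β) * Real.log (μ s a) +
          γ * (J s' - (1 / β) * H s'))) +
      (-((1 - γ) / β) * (lam s + 1)) := by
  intro s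
  have key : ∀ a : A,
      (∑ s', μ s a * p s a s' * (c s a s' + γ * J s')) -
        (1 / β) * ∑ s', μ s a * p s a s' *
          (-Real.log (p s a s') - Real.log (μ s a) + H s')
      = (∑ s', μ s a * p s a s' *
          (c s a s' + (γ / β) * Real.log (p s a s') + (γ / β) * Real.log (μ s a) +
            γ * (J s' - (1 / β) * H s'))) +
        μ s a * (-((1 - γ) / β) * (lam s + 1)) := by
    intro a
    have h1 := hp1 s a
    have h2 := hlam s a
    have s1 : ∑ s', μ s a * p s a s' * (c s a s' + γ * J s')
        = μ s a * (∑ s', p s a s' * c s a s') +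
          μ s a * γ * (∑ s', p s a s' * J s') := by
      rw [Finset.mul_sum, Finset.mul_sum, ← Finset.sum_add_distrib]
      exact Finset.sum_congr rfl fun s' _ => by ring
    have s2 : ∑ s', μ s a * p s a s' *
          (-Real.log (p s a s') - Real.log (μ s a) + H s')
        = μ s a * (-(∑ s', p s a s' * Real.log (p s a s')) -
            Real.log (μ s a) * (∑ s', p s a s') + (∑ s', p s a s' * H s')) := by
      simp only [Finset.mul_sum, mul_add, mul_sub, mul_neg, ← Finset.sum_neg_distrib,
        ← Finset.sum_sub_distrib, ← Finset.sum_add_distrib]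
      exact Finset.sum_congr rfl fun s' _ => by ring
    have s3 : ∑ s', μ s a * p s a s' *
          (c s a s' + (γ / β) * Real.log (p s a s') + (γ / β) * Real.log (μ s a) +
            γ * (J s' - (1 / β) * H s'))
        = μ s a * ((∑ s', p s a s' * c s a s') +
            (γ / β) * (∑ s', p s a s' * Real.log (p s a s')) +
            (γ / β) * Real.log (μ s a) * (∑ s', p s a s') +
            γ * (∑ s', p s a s' * J s') -
            (γ / β) * (∑ s', p s a s' * H s')) := by
      simp only [Finset.mul_sum, mul_add, mul_sub, ← Finset.sum_add_distrib,
        ← Finset.sum_sub_distrib]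
      exact Finset.sum_congr rfl fun s' _ => by ring
    rw [s1, s2, s3, h1]
    linear_combination (-(μ s a) * ((1 - γ) / β)) * h2
  rw [hJ s, hH s, Finset.mul_sum, ← Finset.sum_sub_distrib]
  simp only [key]
  rw [Finset.sum_add_distrib, ← Finset.sum_mul, hμ1 s]
  ring
end

section
/- Let μ be a stochastic policy with μ(a|s) > 0 and Σ_{a∈A} μ(a|s) = 1 for all s, and let α ∈ (0,1) be an entropy discount factor. Suppose J, H_d : S → ℝ satisfy J(s) = Σ_{a∈A} Σ_{s'∈S} μ(a|s) p(s'|s,a) ( c(s,a,s') + γ J(s') ) and H_d(s) = Σ_{a∈A} Σ_{s'∈S} μ(a|s) p(s'|s,a) ( −log p(s'|s,a) − log μ(a|s) + α H_d(s') ), and suppose λ : S → ℝ satisfies, for all s ∈ S and a ∈ A, α Σ_{s'∈S} p(s'|s,a) H_d(s') = Σ_{s'∈S} p(s'|s,a) log p(s'|s,a) + log( α μ(a|s) ) + λ_s. Then the free-energy function V(s) = J(s) − (1/β) H_d(s) satisfies the recursive Bellman equation V(s) = Σ_{a∈A} Σ_{s'∈S} μ(a|s) p(s'|s,a) ( c(s,a,s')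 + (γ/(αβ)) log p(s'|s,a) + (γ/(αβ)) log μ(a|s) + γ V(s') ) + c₀(s), where c₀(s) = ((γ−α)/(αβ))( λ_s + log α ). -/
/-- (Theorem 3, infinite-entropy case.) If `J` satisfies the value-function Bellman
recursion, the discounted entropy `H_d` (with entropy discount `α ∈ (0,1)`) satisfies
its Bellman recursion, and `λ : S → ℝ` satisfies the algebraic relation
`α Σ_{s'} p(s'|s,a) H_d(s') = Σ_{s'} p(s'|s,a) log p(s'|s,a) + log(α μ(a|s)) + λ_s`,
then the free energy `V = J − (1/β)H_d` satisfies the recursive Bellman equation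
`V(s) = Σ_{a,s'} μ(a|s) p(s'|s,a)(c + (γ/(αβ)) log p + (γ/(αβ)) log μ + γ V(s')) + c₀(s)`
with `c₀(s) = ((γ−α)/(αβ))(λ_s + log α)`. -/
theorem free_energy_bellman_equation_discounted_entropy
    {S A : Type*} [Fintype S] [Fintype A] [Nonempty S] [Nonempty A]
    (p : S → A → S → ℝ) (c : S → A → S → ℝ) (β γ : ℝ)
    (hp0 : ∀ s a s', 0 ≤ p s a s') (hp1 : ∀ s a, ∑ s', p s a s' = 1)
    (hβ : 0 < β) (hγ0 : 0 < γ) (hγ1 : γ ≤ 1)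
    (α : ℝ) (hα0 : 0 < α) (hα1 : α < 1)
    (μ : S → A → ℝ) (hμpos : ∀ s a, 0 < μ s a) (hμ1 : ∀ s, ∑ a, μ s a = 1)
    (J Hd : S → ℝ)
    (hJ : ∀ s, J s = ∑ a, ∑ s', μ s a * p s a s' * (c s a s' + γ * J s'))
    (hH : ∀ s, Hd s = ∑ a, ∑ s', μ s a * p s a s' *
      (-Real.log (p s a s') - Real.log (μ s a) + α * Hd s'))
    (lam : S → ℝ)
    (hlam : ∀ s a, α * ∑ s', p s a s' * Hd s' =
      (∑ s', p s a s' * Real.log (p s a s')) + Real.log (α * μ s a) + lam s) :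
    ∀ s, J s - (1 / β) * Hd s =
      (∑ a, ∑ s', μ s a * p s a s' *
        (c s a s' + (γ / (α * β)) * Real.log (p s a s') +
          (γ / (α * β)) * Real.log (μ s a) +
          γ * (J s' - (1 / β) * Hd s'))) +
      ((γ - α) / (α * β)) * (lam s + Real.log α) := by
  intro s
  have hμs := hμ1 s
  -- per-action relation from hlam
  have key : ∀ a, (∑ s', p s a s' * Hd s') =
      ((∑ s', p s a s' * Real.log (p s a s')) + Real.log (μ s a)
        + Real.log α + lam s) / α := by
    intro a
    have h := hlam s a
    rw [Real.log_mul hα0.ne' (hμpos s a).ne'] at h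
    field_simp
    linarith
  -- expand the inner sum in the goal
  have expand : ∀ a,
      (∑ s', μ s a * p s a s' *
        (c s a s' + (γ / (α * β)) * Real.log (p s a s') +
          (γ / (α * β)) * Real.log (μ s a) +
          γ * (J s' - (1 / β) * Hd s')))
      = (∑ s', μ s a * p s a s' * (c s a s' + γ * J s'))
        + μ s a * ((γ / (α * β)) *
            ((∑ s', p s a s' * Real.log (p s a s')) + Real.log (μ s a))
          - (γ / β) * (∑ s', p s a s' * Hd s')) := by
    intro a
    have h1 := hp1 s a
    calc (∑ s', μ s a * p s a s' *
        (c s a s' + (γ / (α * β)) * Real.log (p s a s') +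
          (γ / (α * β)) * Real.log (μ s a) +
          γ * (J s' - (1 / β) * Hd s')))
        = ∑ s', (μ s a * p s a s' * (c s a s' + γ * J s')
            + (μ s a * (γ / (α * β))) * (p s a s' * Real.log (p s a s'))
            + (μ s a * ((γ / (α * β)) * Real.log (μ s a))) * p s a s'
            - (μ s a * (γ / β)) * (p s a s' * Hd s')) :=
          Finset.sum_congr rfl fun s' _ => by ring
      _ = (∑ s', μ s a * p s a s' * (c s a s' + γ * J s'))
            + (μ s a * (γ / (α * β))) * (∑ s', p s a s' * Real.log (p s a s'))
            + (μ s a * ((γ / (α * β)) * Real.log (μ s a))) * (∑ s', p s a s')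
            - (μ s a * (γ / β)) * (∑ s', p s a s' * Hd s') := by
          rw [Finset.sum_sub_distrib, Finset.sum_add_distrib, Finset.sum_add_distrib,
            ← Finset.mul_sum, ← Finset.mul_sum, ← Finset.mul_sum]
      _ = _ := by rw [h1]; ring
  -- expand Hd s similarly
  have hHs : Hd s = ∑ a, μ s a *
      (-(∑ s', p s a s' * Real.log (p s a s')) - Real.log (μ s a)
        + α * (∑ s', p s a s' * Hd s')) := by
    rw [hH s]
    refine Finset.sum_congr rfl fun a _ => ?_
    have h1 := hp1 s a
    calc (∑ s', μ s a * p s a s' *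
          (-Real.log (p s a s') - Real.log (μ s a) + α * Hd s'))
        = ∑ s', (-(μ s a) * (p s a s' * Real.log (p s a s'))
            + (-(μ s a) * Real.log (μ s a)) * p s a s'
            + (μ s a * α) * (p s a s' * Hd s')) :=
          Finset.sum_congr rfl fun s' _ => by ring
      _ = -(μ s a) * (∑ s', p s a s' * Real.log (p s a s'))
            + (-(μ s a) * Real.log (μ s a)) * (∑ s', p s a s')
            + (μ s a * α) * (∑ s', p s a s' * Hd s') := by
          rw [Finset.sum_add_distrib, Finset.sum_add_distrib,
            ← Finset.mul_sum, ← Finset.mul_sum, ← Finset.mul_sum]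
      _ = _ := by rw [h1]; ring
  simp only [expand, Finset.sum_add_distrib, ← hJ s, hHs, key]
  have L : (∑ a, μ s a *
      (-(∑ s', p s a s' * Real.log (p s a s')) - Real.log (μ s a)
        + α * (((∑ s', p s a s' * Real.log (p s a s')) + Real.log (μ s a)
          + Real.log α + lam s) / α)))
      = Real.log α + lam s := by
    have : ∀ a ∈ (Finset.univ : Finset A), μ s a *
        (-(∑ s', p s a s' * Real.log (p s a s')) - Real.log (μ s a)
          + α * (((∑ s', p s a s' * Real.log (p s a s')) + Real.log (μ s a)
            + Real.log α + lam s) / α))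
        = μ s a * (Real.log α + lam s) := by
      intro a _
      rw [mul_div_cancel₀ _ hα0.ne']
      ring
    rw [Finset.sum_congr rfl this, ← Finset.sum_mul, hμs, one_mul]
  have R : (∑ a, μ s a *
      ((γ / (α * β)) * ((∑ s', p s a s' * Real.log (p s a s')) + Real.log (μ s a))
        - (γ / β) * (((∑ s', p s a s' * Real.log (p s a s')) + Real.log (μ s a)
          + Real.log α + lam s) / α)))
      = -(γ / (α * β)) * (Real.log α + lam s) := by
    have : ∀ a ∈ (Finset.univ : Finset A), μ s a *
        ((γ / (α * β)) * ((∑ s', p s a s' * Real.log (p s a s')) + Real.log (μ s a))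
          - (γ / β) * (((∑ s', p s a s' * Real.log (p s a s')) + Real.log (μ s a)
            + Real.log α + lam s) / α))
        = μ s a * (-(γ / (α * β)) * (Real.log α + lam s)) := by
      intro a _
      have hne : μ s a ≠ 0 := (hμpos s a).ne'
      have hα : α ≠ 0 := hα0.ne'
      field_simp
      ring
    rw [Finset.sum_congr rfl this, ← Finset.sum_mul, hμs, one_mul]
  rw [L, R]
  field_simp
  ring
end

section
/- Let δ ∈ S be an absorbing termination state, i.e., p(δ|δ,a) = 1 for all a ∈ A. Suppose that for every deterministic policy d : S → A, identifying d with the stochastic policy μ_d, one has q^{μ_d}_{|S|}(s) > 0 for every s ∈ S. Then there exist a vector ξ : S∖{δ} → ℝ with ξ_s > 0 for all s ≠ δ and a scalar λ < 1 such that Σ_{s'∈S, s'≠δ} p(s'|s,a) ξ_{s'} ≤ λ ξ_s for all s ∈ S∖{δ} and all a ∈ A. -/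
open Finset


section Aux

variable {S A : Type*} [Fintype S] [Fintype A] [DecidableEq S] [Nonempty A]

/-- Worst-case probability of NOT reaching `δ` within `k` steps. -/
noncomputable def wc (p : S → A → S → ℝ) (δ : S) : ℕ → S → ℝ
  | 0 => fun s => if s = δ then 0 else 1
  | (k + 1) => fun s =>
      if s = δ then 0 else
        Finset.univ.sup' Finset.univ_nonempty
          (fun a => ∑ s', p s a s' * wc p δ k s')

variable {p : S → A → S → ℝ} {δ : S}

lemma wc_delta (k : ℕ) : wc p δ k δ = 0 := by cases k <;> simp [wc]

lemma wc_nonneg (hp0 : ∀ s a s', 0 ≤ p s a s') : ∀ k s, 0 ≤ wc p δ k s := by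
  intro k
  induction k with
  | zero => intro s; simp only [wc]; split <;> norm_num
  | succ k ih =>
      intro s
      simp only [wc]
      split
      · exact le_refl 0
      · refine le_trans ?_ (Finset.le_sup' _ (mem_univ (Classical.arbitrary A)))
        exact Finset.sum_nonneg fun s' _ => mul_nonneg (hp0 _ _ _) (ih s')

lemma wc_le_one (hp0 : ∀ s a s', 0 ≤ p s a s') (hp1 : ∀ s a, ∑ s', p s a s' = 1) :
    ∀ k s, wc p δ k s ≤ 1 := by
  intro k
  induction k with
  | zero => intro s; simp only [wc]; split <;> norm_num
  | succ k ih =>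
      intro s
      simp only [wc]
      split
      · norm_num
      · apply Finset.sup'_le
        intro a _
        calc ∑ s', p s a s' * wc p δ k s' ≤ ∑ s', p s a s' * 1 :=
              Finset.sum_le_sum fun s' _ => mul_le_mul_of_nonneg_left (ih s') (hp0 _ _ _)
          _ = 1 := by simp [hp1 s a]

lemma wc_step (k : ℕ) {s : S} (hs : s ≠ δ) (a : A) :
    ∑ s', p s a s' * wc p δ k s' ≤ wc p δ (k + 1) s := by
  simp only [wc, if_neg hs]
  exact Finset.le_sup' (fun a => ∑ s', p s a s' * wc p δ k s') (mem_univ a)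

lemma wc_succ_le (hp0 : ∀ s a s', 0 ≤ p s a s') (hp1 : ∀ s a, ∑ s', p s a s' = 1) :
    ∀ k s, wc p δ (k + 1) s ≤ wc p δ k s := by
  intro k
  induction k with
  | zero =>
      intro s
      by_cases hs : s = δ
      · subst hs; simp [wc_delta]
      · have h1 : wc p δ 0 s = 1 := by simp [wc, hs]
        rw [h1]; exact wc_le_one hp0 hp1 1 s
  | succ k ih =>
      intro s
      by_cases hs : s = δ
      · subst hs; simp [wc_delta]
      · conv_lhs => simp only [wc, if_neg hs]
        apply Finset.sup'_le
        intro a _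
        calc ∑ s', p s a s' * wc p δ (k + 1) s'
            ≤ ∑ s', p s a s' * wc p δ k s' :=
              Finset.sum_le_sum fun s' _ => mul_le_mul_of_nonneg_left (ih s') (hp0 _ _ _)
          _ ≤ wc p δ (k + 1) s := wc_step k hs a

end Aux
section Key

variable {S A : Type*} [Fintype S] [Fintype A] [DecidableEq S] [DecidableEq A] [Nonempty S] [Nonempty A]
variable {p : S → A → S → ℝ} {δ : S}

lemma wc_lt_one (hp0 : ∀ s a s', 0 ≤ p s a s') (hp1 : ∀ s a, ∑ s', p s a s' = 1)
    (hproper : ∀ d : S → A, ∀ s,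
      0 < reach p (fun s a => if a = d s then (1 : ℝ) else 0) δ (Fintype.card S) s)
    {s : S} (hs : s ≠ δ) : wc p δ (Fintype.card S) s < 1 := by
  classical
  set n := Fintype.card S with hn
  by_contra hlt
  have h1 : wc p δ n s = 1 := le_antisymm (wc_le_one hp0 hp1 n s) (not_lt.mp hlt)
  -- trap sets
  set T : ℕ → Finset S := fun k => univ.filter (fun t => t ≠ δ ∧ wc p δ k t = 1) with hT
  have hTmem : ∀ k t, t ∈ T k ↔ t ≠ δ ∧ wc p δ k t = 1 := by
    intro k t; simp [hT]
  have hTsucc : ∀ k t, t ∈ T (k + 1) ↔ t ≠ δ ∧ ∃ a, ∀ s', p t a s' ≠ 0 → s' ∈ T k := by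
    intro k t
    constructor
    · intro ht
      obtain ⟨htδ, hwt⟩ := (hTmem _ _).mp ht
      refine ⟨htδ, ?_⟩
      simp only [wc, if_neg htδ] at hwt
      obtain ⟨a, -, hae⟩ := Finset.exists_mem_eq_sup' Finset.univ_nonempty
        (fun a => ∑ s', p t a s' * wc p δ k s')
      rw [hae] at hwt
      have hterm : ∀ s' ∈ (univ : Finset S), p t a s' * (1 - wc p δ k s') = 0 := by
        rw [← Finset.sum_eq_zero_iff_of_nonneg
          (fun s' _ => mul_nonneg (hp0 _ _ _) (sub_nonneg.mpr (wc_le_one hp0 hp1 k s')))]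
        have : ∑ s', p t a s' * (1 - wc p δ k s')
            = (∑ s', p t a s') - ∑ s', p t a s' * wc p δ k s' := by
          rw [← Finset.sum_sub_distrib]; congr 1; ext s'; ring
        rw [this, hp1, hwt]; ring
      refine ⟨a, fun s' hps' => ?_⟩
      have h0 := hterm s' (mem_univ s')
      have hw1 : wc p δ k s' = 1 := by
        rcases mul_eq_zero.mp h0 with h | h
        · exact absurd h hps'
        · linarith
      have hs'δ : s' ≠ δ := by
        intro he; rw [he, wc_delta] at hw1; norm_num at hw1
      exact (hTmem k s').mpr ⟨hs'δ, hw1⟩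
    · rintro ⟨htδ, a, ha⟩
      have hsum : ∑ s', p t a s' * wc p δ k s' = 1 := by
        rw [← hp1 t a]
        apply Finset.sum_congr rfl
        intro s' _
        by_cases hps' : p t a s' = 0
        · simp [hps']
        · rw [((hTmem k s').mp (ha s' hps')).2, mul_one]
      have hle : (1 : ℝ) ≤ wc p δ (k + 1) t := by
        rw [← hsum]; exact wc_step k htδ a
      exact (hTmem _ _).mpr ⟨htδ, le_antisymm (wc_le_one hp0 hp1 _ _) hle⟩
  have hTanti : ∀ k, T (k + 1) ⊆ T k := by
    intro k t ht
    obtain ⟨htδ, hw⟩ := (hTmem _ _).mp ht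
    refine (hTmem _ _).mpr ⟨htδ, le_antisymm (wc_le_one hp0 hp1 _ _) ?_⟩
    rw [← hw]; exact wc_succ_le hp0 hp1 k t
  have hTchain : ∀ m k, k ≤ m → T m ⊆ T k := by
    intro m
    induction m with
    | zero => intro k hk; rw [Nat.le_zero.mp hk]
    | succ m ih =>
        intro k hk
        rcases Nat.eq_or_lt_of_le hk with he | hlt'
        · rw [he]
        · exact (hTanti m).trans (ih k (by omega))
  -- stabilization
  have hsn : s ∈ T n := (hTmem n s).mpr ⟨hs, h1⟩
  have hstab : ∃ k < n, T (k + 1) = T k := by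
    by_contra hc
    push_neg at hc
    have hss : ∀ k < n, T (k + 1) ⊂ T k := fun k hk =>
      Finset.ssubset_iff_subset_ne.mpr ⟨hTanti k, hc k hk⟩
    have hcard : ∀ k, k ≤ n → (T k).card + k ≤ (T 0).card := by
      intro k
      induction k with
      | zero => simp
      | succ k ih =>
          intro hk
          have h2 := Finset.card_lt_card (hss k (by omega))
          have h3 := ih (by omega)
          omega
    have h0 : (T 0).card < n := by
      have hsub : T 0 ⊆ univ.erase δ := by
        intro t ht
        exact Finset.mem_erase.mpr ⟨((hTmem 0 t).mp ht).1, mem_univ t⟩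
      have := Finset.card_le_card hsub
      rw [Finset.card_erase_of_mem (mem_univ δ), Finset.card_univ] at this
      have hpos : 0 < n := Fintype.card_pos
      omega
    have hpos : 1 ≤ (T n).card := Finset.card_pos.mpr ⟨s, hsn⟩
    have := hcard n le_rfl
    omega
  obtain ⟨k, hkn, hTk⟩ := hstab
  have hsk : s ∈ T k := hTchain n k (le_of_lt hkn) hsn
  have hA : ∀ t ∈ T k, ∃ a : A, ∀ s', p t a s' ≠ 0 → s' ∈ T k := by
    intro t ht
    rw [← hTk] at ht
    exact ((hTsucc k t).mp ht).2
  set d : S → A := fun t =>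
    if h : t ∈ T k then (hA t h).choose else Classical.arbitrary A with hd
  have hreach0 : ∀ m, ∀ t ∈ T k,
      reach p (fun s a => if a = d s then (1 : ℝ) else 0) δ m t = 0 := by
    intro m
    induction m with
    | zero =>
        intro t ht
        have htδ := ((hTmem k t).mp ht).1
        simp [reach, htδ]
    | succ m ih =>
        intro t ht
        have htδ := ((hTmem k t).mp ht).1
        simp only [reach, if_neg htδ]
        apply Finset.sum_eq_zero
        intro a _
        apply Finset.sum_eq_zero
        intro s' _
        by_cases ha : a = d t
        · subst ha
          by_cases hps' : p t (d t) s' = 0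
          · simp [hps']
          · have hdt : d t = (hA t ht).choose := by simp [hd, ht]
            rw [hdt] at hps'
            have hs' : s' ∈ T k := (hA t ht).choose_spec s' hps'
            rw [ih s' hs', mul_zero]
        · simp [ha]
  have := hproper d s
  rw [hreach0 n s hsk] at this
  exact lt_irrefl 0 this

end Key

/-- (Lemma 4.) If `δ` is absorbing and every deterministic policy reaches `δ` within
`|S|` steps with positive probability from every state, then there exist a positive
weight vector `ξ` on `S∖{δ}` and a scalar `λ < 1` such that
`Σ_{s'≠δ} p(s'|s,a) ξ(s') ≤ λ ξ(s)` for all `s ≠ δ` and all actions `a`. -/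
theorem exists_contraction_weights
    {S A : Type*} [Fintype S] [Fintype A] [DecidableEq S] [DecidableEq A]
    [Nonempty S] [Nonempty A]
    (p : S → A → S → ℝ)
    (hp0 : ∀ s a s', 0 ≤ p s a s')
    (hp1 : ∀ s a, ∑ s', p s a s' = 1)
    (δ : S)
    (habs : ∀ a, p δ a δ = 1)
    (hproper : ∀ d : S → A, ∀ s,
      0 < reach p (fun s a => if a = d s then (1 : ℝ) else 0) δ (Fintype.card S) s) :
    ∃ (ξ : S → ℝ) (lam : ℝ),
      (∀ s, s ≠ δ → 0 < ξ s) ∧ lam < 1 ∧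
      ∀ s, s ≠ δ → ∀ a,
        (∑ s' ∈ Finset.univ.filter (fun s' => s' ≠ δ), p s a s' * ξ s') ≤ lam * ξ s := by
  classical
  by_cases hall : ∀ t : S, t = δ
  · exact ⟨fun _ => 1, 0, fun s hsδ => absurd (hall s) hsδ, by norm_num,
      fun s hsδ => absurd (hall s) hsδ⟩
  push_neg at hall
  obtain ⟨t₀, ht₀⟩ := hall
  set n := Fintype.card S with hn
  set ξ : S → ℝ := fun s => ∑ k ∈ Finset.range (n + 1), wc p δ k s with hξ
  have hξδ : ξ δ = 0 := Finset.sum_eq_zero fun k _ => wc_delta k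
  have hξpos : ∀ s, s ≠ δ → 0 < ξ s := by
    intro s hsδ
    have h0 : wc p δ 0 s = 1 := by simp [wc, hsδ]
    have hle : wc p δ 0 s ≤ ξ s :=
      Finset.single_le_sum (f := fun k => wc p δ k s)
        (fun k _ => wc_nonneg hp0 k s) (Finset.mem_range.mpr (by omega))
    rw [h0] at hle; linarith
  have hξub : ∀ s, ξ s ≤ (n : ℝ) + 1 := by
    intro s
    calc ξ s ≤ ∑ k ∈ Finset.range (n + 1), (1 : ℝ) :=
          Finset.sum_le_sum fun k _ => wc_le_one hp0 hp1 k s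
      _ = (n : ℝ) + 1 := by simp
  obtain ⟨s₀, hs₀mem, hs₀min⟩ := Finset.exists_min_image
    (univ.filter (fun t => t ≠ δ)) (fun t => 1 - wc p δ n t) ⟨t₀, by simp [ht₀]⟩
  set ε := 1 - wc p δ n s₀ with hε'
  have hs₀δ : s₀ ≠ δ := by simpa using hs₀mem
  have hε : 0 < ε := by
    have := wc_lt_one hp0 hp1 hproper hs₀δ
    rw [← hn] at this
    simp only [hε']; linarith
  refine ⟨ξ, 1 - ε / ((n : ℝ) + 1), hξpos, by nlinarith [div_pos hε (by positivity : (0:ℝ) < (n:ℝ)+1)], ?_⟩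
  intro s hsδ a
  have hfil : ∑ s' ∈ univ.filter (fun s' => s' ≠ δ), p s a s' * ξ s'
      = ∑ s', p s a s' * ξ s' := by
    apply Finset.sum_subset (Finset.filter_subset _ _)
    intro x _ hx
    have hxδ : x = δ := by simpa using hx
    rw [hxδ, hξδ, mul_zero]
  have hswap : ∑ s', p s a s' * ξ s'
      = ∑ k ∈ Finset.range (n + 1), ∑ s', p s a s' * wc p δ k s' := by
    simp only [hξ, Finset.mul_sum]
    rw [Finset.sum_comm]
  have hb : ∑ k ∈ Finset.range (n + 1), ∑ s', p s a s' * wc p δ k s'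
      ≤ ∑ k ∈ Finset.range (n + 1), wc p δ (k + 1) s :=
    Finset.sum_le_sum fun k _ => wc_step k hsδ a
  have hsplit : ∑ k ∈ Finset.range (n + 1), wc p δ (k + 1) s
      = (∑ k ∈ Finset.range n, wc p δ (k + 1) s) + wc p δ (n + 1) s :=
    Finset.sum_range_succ _ n
  have hξsplit : ξ s = (∑ k ∈ Finset.range n, wc p δ (k + 1) s) + wc p δ 0 s := by
    simp only [hξ]
    exact Finset.sum_range_succ' _ n
  have hw0 : wc p δ 0 s = 1 := by simp [wc, hsδ]
  have hmono : wc p δ (n + 1) s ≤ wc p δ n s := wc_succ_le hp0 hp1 n s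
  have hεs : ε ≤ 1 - wc p δ n s := hs₀min s (by simp [hsδ])
  have key : ∑ s', p s a s' * ξ s' ≤ ξ s - ε := by
    rw [hswap]
    calc ∑ k ∈ Finset.range (n + 1), ∑ s', p s a s' * wc p δ k s'
        ≤ (∑ k ∈ Finset.range n, wc p δ (k + 1) s) + wc p δ (n + 1) s := by
          rw [← hsplit]; exact hb
      _ ≤ (∑ k ∈ Finset.range n, wc p δ (k + 1) s) + wc p δ n s := by linarith
      _ ≤ ξ s - ε := by rw [hξsplit, hw0]; linarith
  rw [hfil]
  have hc : (0 : ℝ) ≤ ε / ((n : ℝ) + 1) := by positivity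
  have h2 : ε / ((n : ℝ) + 1) * ξ s ≤ ε / ((n : ℝ) + 1) * ((n : ℝ) + 1) :=
    mul_le_mul_of_nonneg_left (hξub s) hc
  have h3 : ε / ((n : ℝ) + 1) * ((n : ℝ) + 1) = ε :=
    div_mul_cancel₀ _ (by positivity)
  nlinarith [key, h2, h3]
end

section
/- For Ψ : S×A → ℝ define the noise term w(s,a,s') = c(s,a,s') − (γ²/β) log Σ_{a'∈A} exp(−(β/γ) Ψ(s',a')) − [T̄Ψ](s,a). Then: (i) the noise has zero conditional mean, Σ_{s'∈S} p(s'|s,a) w(s,a,s') = 0 for all s ∈ S and a ∈ A; and (ii) there exists a constant K > 0, depending only on max_{s,a,s'} |c(s,a,s')|, γ, β and |A|, such that Σ_{s'∈S} p(s'|s,a) w(s,a,s')² ≤ K ( 1 + max_{s''∈S, a''∈A} Ψ(s'',a'')² ) for every Ψ : S×A → ℝ, s ∈ S and a ∈ A. -/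
/-- The model-free soft Bellman operator
`[T̄Λ](s,a) = Σ_{s'} p(s'|s,a)(c(s,a,s') − (γ²/β) log Σ_{a'} exp(−(β/γ)Λ(s',a')))`. -/
noncomputable def barBellman {S A : Type*} [Fintype S] [Fintype A]
    (p : S → A → S → ℝ) (c : S → A → S → ℝ) (β γ : ℝ)
    (Λ : S → A → ℝ) : S → A → ℝ :=
  fun s a =>
    ∑ s', p s a s' *
      (c s a s' - (γ ^ 2 / β) * Real.log (∑ a', Real.exp (-(β / γ) * Λ s' a')))

/-- The stochastic-approximation noise term
`w(s,a,s') = c(s,a,s') − (γ²/β) log Σ_{a'} exp(−(β/γ)Ψ(s',a')) − [T̄Ψ](s,a)`. -/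
noncomputable def noiseTerm {S A : Type*} [Fintype S] [Fintype A]
    (p : S → A → S → ℝ) (c : S → A → S → ℝ) (β γ : ℝ)
    (Ψ : S → A → ℝ) (s : S) (a : A) (s' : S) : ℝ :=
  c s a s' - (γ ^ 2 / β) * Real.log (∑ a', Real.exp (-(β / γ) * Ψ s' a')) -
    barBellman p c β γ Ψ s a

/-!
The noise term is a sample of `f(s') = c(s,a,s') − (γ²/β) log Σ_{a'} exp(−(β/γ) Ψ(s',a'))`
minus its mean under `p(·|s,a)`, so it is centred, and its second moment is the variance of `f`,
which is at most the second moment of `f`. A log-sum-exp lies within `log |A|` of its largest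
exponent, so `|f| ≤ ‖c‖∞ + (γ²/β) log |A| + γ ‖Ψ‖∞`, and Cauchy–Schwarz bounds the square of
this by `K (1 + ‖Ψ‖∞²)` with `K = (‖c‖∞ + (γ²/β) log |A|)² + γ²`.
-/

open Finset Real

section WeightedSums

variable {ι : Type*} (s : Finset ι) (w f : ι → ℝ)

theorem Finset.sum_mul_sub_sum_mul_eq_zero (hw : ∑ i ∈ s, w i = 1) :
    ∑ i ∈ s, w i * (f i - ∑ j ∈ s, w j * f j) = 0 := by
  simp only [mul_sub, sum_sub_distrib, ← sum_mul, hw, one_mul, sub_self]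

theorem Finset.sum_mul_sub_sum_mul_sq_le (hw : ∑ i ∈ s, w i = 1) :
    ∑ i ∈ s, w i * (f i - ∑ j ∈ s, w j * f j) ^ 2 ≤ ∑ i ∈ s, w i * f i ^ 2 := by
  set m := ∑ j ∈ s, w j * f j
  have hvar : ∑ i ∈ s, w i * (f i - m) ^ 2 = ∑ i ∈ s, w i * f i ^ 2 - m ^ 2 := by
    have hexp : ∀ i, w i * (f i - m) ^ 2 = w i * f i ^ 2 - 2 * m * (w i * f i) + m ^ 2 * w i :=
      fun i => by ring
    simp only [hexp, sum_add_distrib, sum_sub_distrib, ← mul_sum, hw]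
    ring
  linarith [sq_nonneg m]

theorem Finset.sum_mul_le_of_le (hw0 : ∀ i ∈ s, 0 ≤ w i) (hw : ∑ i ∈ s, w i = 1) {B : ℝ}
    (hf : ∀ i ∈ s, f i ≤ B) : ∑ i ∈ s, w i * f i ≤ B :=
  calc ∑ i ∈ s, w i * f i ≤ ∑ i ∈ s, w i * B :=
        sum_le_sum fun i hi => mul_le_mul_of_nonneg_left (hf i hi) (hw0 i hi)
    _ = B := by rw [← sum_mul, hw, one_mul]

end WeightedSums

theorem Real.abs_log_sum_exp_le {ι : Type*} [Fintype ι] [Nonempty ι] (x : ι → ℝ) {M : ℝ}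
    (hx : ∀ i, |x i| ≤ M) : |log (∑ i, exp (x i))| ≤ log (Fintype.card ι) + M := by
  have hpos : 0 < ∑ i, exp (x i) := sum_pos (fun i _ => exp_pos _) univ_nonempty
  have hcard : (0 : ℝ) < Fintype.card ι := by exact_mod_cast Fintype.card_pos
  have hupper : ∑ i, exp (x i) ≤ Fintype.card ι * exp M :=
    calc ∑ i, exp (x i) ≤ ∑ _i : ι, exp M :=
          sum_le_sum fun i _ => exp_le_exp.mpr (abs_le.mp (hx i)).2
      _ = Fintype.card ι * exp M := by rw [sum_const, card_univ, nsmul_eq_mul]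
  obtain ⟨i₀⟩ := ‹Nonempty ι›
  have hlower : exp (-M) ≤ ∑ i, exp (x i) :=
    (exp_le_exp.mpr (abs_le.mp (hx i₀)).1).trans
      (single_le_sum (fun i _ => (exp_pos (x i)).le) (mem_univ i₀))
  have hlog_upper : log (∑ i, exp (x i)) ≤ log (Fintype.card ι) + M := by
    simpa [log_mul hcard.ne' (exp_pos M).ne'] using log_le_log hpos hupper
  have hlog_lower : -M ≤ log (∑ i, exp (x i)) := by
    simpa using log_le_log (exp_pos _) hlower
  have hlog_card : 0 ≤ log (Fintype.card ι) := log_nonneg (by exact_mod_cast hcard)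
  exact abs_le.mpr ⟨by linarith, hlog_upper⟩

section SoftBellman

variable {S A : Type*} [Fintype A]

noncomputable def softBellmanSample (c : S → A → S → ℝ) (β γ : ℝ) (Ψ : S → A → ℝ)
    (s : S) (a : A) (s' : S) : ℝ :=
  c s a s' - (γ ^ 2 / β) * log (∑ a', exp (-(β / γ) * Ψ s' a'))

theorem noiseTerm_eq [Fintype S] (p : S → A → S → ℝ) (c : S → A → S → ℝ) (β γ : ℝ)
    (Ψ : S → A → ℝ) (s : S) (a : A) (s' : S) :
    noiseTerm p c β γ Ψ s a s' = softBellmanSample c β γ Ψ s a s' -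
      ∑ s'', p s a s'' * softBellmanSample c β γ Ψ s a s'' :=
  rfl

theorem abs_softBellmanSample_le [Nonempty A] (c : S → A → S → ℝ) {β γ : ℝ} (hβ : 0 < β)
    (hγ : 0 < γ) (Ψ : S → A → ℝ) (s : S) (a : A) (s' : S) {C M : ℝ} (hc : |c s a s'| ≤ C)
    (hΨ : ∀ a', |Ψ s' a'| ≤ M) :
    |softBellmanSample c β γ Ψ s a s'| ≤ C + γ ^ 2 / β * log (Fintype.card A) + γ * M := by
  have hlog := abs_log_sum_exp_le (fun a' => -(β / γ) * Ψ s' a') (M := β / γ * M) fun a' => by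
    rw [abs_mul, abs_neg, abs_of_pos (by positivity)]
    exact mul_le_mul_of_nonneg_left (hΨ a') (by positivity)
  calc |softBellmanSample c β γ Ψ s a s'|
      ≤ |c s a s'| + |γ ^ 2 / β * log (∑ a', exp (-(β / γ) * Ψ s' a'))| := abs_sub _ _
    _ = |c s a s'| + γ ^ 2 / β * |log (∑ a', exp (-(β / γ) * Ψ s' a'))| := by
        rw [abs_mul, abs_of_pos (by positivity : 0 < γ ^ 2 / β)]
    _ ≤ C + γ ^ 2 / β * (log (Fintype.card A) + β / γ * M) := by gcongr
    _ = C + γ ^ 2 / β * log (Fintype.card A) + γ * M := by field_simp; ring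

end SoftBellman

theorem noiseTerm_mean_zero_and_variance_bound_general
    {S A : Type*} [Fintype S] [Fintype A] [Nonempty S] [Nonempty A]
    (p : S → A → S → ℝ) (c : S → A → S → ℝ) (β γ : ℝ)
    (hp0 : ∀ s a s', 0 ≤ p s a s') (hp1 : ∀ s a, ∑ s', p s a s' = 1)
    (hβ : 0 < β) (hγ0 : 0 < γ) :
    (∀ (Ψ : S → A → ℝ) (s : S) (a : A),
      ∑ s', p s a s' * noiseTerm p c β γ Ψ s a s' = 0) ∧
    (∃ K : ℝ, 0 < K ∧
      ∀ (Ψ : S → A → ℝ) (s : S) (a : A),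
        ∑ s', p s a s' * (noiseTerm p c β γ Ψ s a s') ^ 2 ≤
          K * (1 + Finset.univ.sup' Finset.univ_nonempty
            (fun sa : S × A => (Ψ sa.1 sa.2) ^ 2))) := by
  simp only [noiseTerm_eq]
  refine ⟨fun Ψ s a => sum_mul_sub_sum_mul_eq_zero _ _ _ (hp1 s a), ?_⟩
  set C := univ.sup' univ_nonempty fun t : S × A × S => |c t.1 t.2.1 t.2.2|
  set D := C + γ ^ 2 / β * log (Fintype.card A)
  refine ⟨D ^ 2 + γ ^ 2, by positivity, fun Ψ s a => ?_⟩
  set M2 := univ.sup' univ_nonempty fun sa : S × A => Ψ sa.1 sa.2 ^ 2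
  have hM2 : 0 ≤ M2 := (sq_nonneg _).trans
    (le_sup' (fun sa : S × A => Ψ sa.1 sa.2 ^ 2) (mem_univ (Classical.arbitrary (S × A))))
  have hsample : ∀ s' ∈ univ, softBellmanSample c β γ Ψ s a s' ^ 2 ≤ (D + γ * √M2) ^ 2 := by
    intro s' _
    have hc : |c s a s'| ≤ C :=
      le_sup' (fun t : S × A × S => |c t.1 t.2.1 t.2.2|) (mem_univ (s, a, s'))
    have hΨ : ∀ a', |Ψ s' a'| ≤ √M2 := fun a' =>
      abs_le_sqrt (le_sup' (fun sa : S × A => Ψ sa.1 sa.2 ^ 2) (mem_univ (s', a')))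
    exact sq_le_sq.mpr <|
      (abs_softBellmanSample_le c hβ hγ0 Ψ s a s' hc hΨ).trans (le_abs_self _)
  have hcauchy_schwarz : (D + γ * √M2) ^ 2 ≤ (D ^ 2 + γ ^ 2) * (1 + M2) := by
    nlinarith [sq_nonneg (D * √M2 - γ), sq_sqrt hM2]
  calc _ ≤ ∑ s', p s a s' * softBellmanSample c β γ Ψ s a s' ^ 2 :=
        sum_mul_sub_sum_mul_sq_le _ _ _ (hp1 s a)
    _ ≤ (D + γ * √M2) ^ 2 := sum_mul_le_of_le _ _ _ (fun s' _ => hp0 s a s') (hp1 s a) hsample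
    _ ≤ (D ^ 2 + γ ^ 2) * (1 + M2) := hcauchy_schwarz

/-- (i) The noise term has zero conditional mean, and (ii) its conditional second
moment is bounded by `K (1 + max_{s'',a''} Ψ(s'',a'')²)` for a constant `K > 0`
uniform in `Ψ`, `s`, `a`. -/
theorem noiseTerm_mean_zero_and_variance_bound
    {S A : Type*} [Fintype S] [Fintype A] [Nonempty S] [Nonempty A]
    (p : S → A → S → ℝ) (c : S → A → S → ℝ) (β γ : ℝ)
    (hp0 : ∀ s a s', 0 ≤ p s a s') (hp1 : ∀ s a, ∑ s', p s a s' = 1)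
    (hβ : 0 < β) (hγ0 : 0 < γ) (hγ1 : γ ≤ 1) :
    (∀ (Ψ : S → A → ℝ) (s : S) (a : A),
      ∑ s', p s a s' * noiseTerm p c β γ Ψ s a s' = 0) ∧
    (∃ K : ℝ, 0 < K ∧
      ∀ (Ψ : S → A → ℝ) (s : S) (a : A),
        ∑ s', p s a s' * (noiseTerm p c β γ Ψ s a s') ^ 2 ≤
          K * (1 + Finset.univ.sup' Finset.univ_nonempty
            (fun sa : S × A => (Ψ sa.1 sa.2) ^ 2))) :=
  noiseTerm_mean_zero_and_variance_bound_general p c β γ hp0 hp1 hβ hγ0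
end

section
/- Let Λ* : S×A → ℝ be a fixed point of the soft Bellman operator T (Λ* = TΛ*), let μ* = μ_{Λ*} be the associated Gibbs policy, and define the free-energy function V*(s) = −(γ/β) log Σ_{a∈A} exp(−(β/γ) Λ*(s,a)). Then V* satisfies the policy-evaluation Bellman equation for μ*: V*(s) = Σ_{a∈A} Σ_{s'∈S} μ*(a|s) p(s'|s,a) ( c(s,a,s') + (γ/β) log p(s'|s,a) + (γ/β) log μ*(a|s) + γ V*(s') ) for all s ∈ S. -/
/-- The Gibbs policy associated with a state-action value function `Λ`:
`μ_Λ(a|s) = exp(−(β/γ)Λ(s,a)) / Σ_{a'} exp(−(β/γ)Λ(s,a'))`. -/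
noncomputable def gibbsPolicy {S A : Type*} [Fintype A]
    (β γ : ℝ) (Λ : S → A → ℝ) (s : S) (a : A) : ℝ :=
  Real.exp (-(β / γ) * Λ s a) / ∑ a', Real.exp (-(β / γ) * Λ s a')

/-- If `Λ*` is a fixed point of the soft Bellman operator, then the free energy
`V*(s) = −(γ/β) log Σ_a exp(−(β/γ)Λ*(s,a))` satisfies the policy-evaluation
Bellman equation for the associated Gibbs policy `μ* = μ_{Λ*}`. -/
theorem free_energy_policy_evaluation
    {S A : Type*} [Fintype S] [Fintype A] [Nonempty S] [Nonempty A]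
    (p : S → A → S → ℝ) (c : S → A → S → ℝ) (β γ : ℝ)
    (hp0 : ∀ s a s', 0 ≤ p s a s') (hp1 : ∀ s a, ∑ s', p s a s' = 1)
    (hβ : 0 < β) (hγ0 : 0 < γ) (hγ1 : γ ≤ 1)
    (Λstar : S → A → ℝ)
    (hfix : ∀ s a, Λstar s a = softBellman p c β γ Λstar s a) :
    ∀ s : S,
      -(γ / β) * Real.log (∑ a, Real.exp (-(β / γ) * Λstar s a)) =
        ∑ a, ∑ s', gibbsPolicy β γ Λstar s a * p s a s' *
          (c s a s' + (γ / β) * Real.log (p s a s') +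
            (γ / β) * Real.log (gibbsPolicy β γ Λstar s a) +
            γ * (-(γ / β) * Real.log (∑ a', Real.exp (-(β / γ) * Λstar s' a')))) := by
  intro s
  have hβ' : (β:ℝ) ≠ 0 := hβ.ne'
  have hγ' : (γ:ℝ) ≠ 0 := hγ0.ne'
  have hZpos : ∀ t : S, 0 < ∑ a, Real.exp (-(β / γ) * Λstar t a) := fun t =>
    Finset.sum_pos (fun a _ => Real.exp_pos _) Finset.univ_nonempty
  have hlogμ : ∀ a, Real.log (gibbsPolicy β γ Λstar s a) =
      -(β / γ) * Λstar s a - Real.log (∑ a', Real.exp (-(β / γ) * Λstar s a')) := by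
    intro a
    rw [gibbsPolicy, Real.log_div (Real.exp_ne_zero _) (hZpos s).ne', Real.log_exp]
  have hμsum : ∑ a, gibbsPolicy β γ Λstar s a = 1 := by
    rw [show (∑ a, gibbsPolicy β γ Λstar s a) =
        (∑ a, Real.exp (-(β / γ) * Λstar s a)) / (∑ a', Real.exp (-(β / γ) * Λstar s a'))
      from (Finset.sum_div _ _ _).symm]
    exact div_self (hZpos s).ne'
  have key : ∀ a, (∑ s', gibbsPolicy β γ Λstar s a * p s a s' *
      (c s a s' + (γ / β) * Real.log (p s a s') +
        (γ / β) * Real.log (gibbsPolicy β γ Λstar s a) +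
        γ * (-(γ / β) * Real.log (∑ a', Real.exp (-(β / γ) * Λstar s' a'))))) =
      gibbsPolicy β γ Λstar s a *
        (-(γ / β) * Real.log (∑ a', Real.exp (-(β / γ) * Λstar s a'))) := by
    intro a
    have hfa := hfix s a
    simp only [softBellman] at hfa
    have expand : ∀ s' : S, gibbsPolicy β γ Λstar s a * p s a s' *
        (c s a s' + (γ / β) * Real.log (p s a s') +
          (γ / β) * Real.log (gibbsPolicy β γ Λstar s a) +
          γ * (-(γ / β) * Real.log (∑ a', Real.exp (-(β / γ) * Λstar s' a')))) =
        gibbsPolicy β γ Λstar s a *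
          (p s a s' * (c s a s' + (γ / β) * Real.log (p s a s')) -
            (γ ^ 2 / β) * (p s a s' * Real.log (∑ a', Real.exp (-(β / γ) * Λstar s' a'))) +
            p s a s' * ((γ / β) * Real.log (gibbsPolicy β γ Λstar s a))) := by
      intro s'; ring
    rw [Finset.sum_congr rfl fun s' _ => expand s', ← Finset.mul_sum]
    have hsum : (∑ s', (p s a s' * (c s a s' + (γ / β) * Real.log (p s a s')) -
          (γ ^ 2 / β) * (p s a s' * Real.log (∑ a', Real.exp (-(β / γ) * Λstar s' a'))) +
          p s a s' * ((γ / β) * Real.log (gibbsPolicy β γ Λstar s a)))) =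
        Λstar s a + (γ / β) * Real.log (gibbsPolicy β γ Λstar s a) := by
      rw [Finset.sum_add_distrib, Finset.sum_sub_distrib, ← Finset.mul_sum,
        ← Finset.sum_mul, hp1 s a, one_mul, ← hfa]
    rw [hsum, hlogμ a]
    congr 1
    field_simp
    ring
  rw [Finset.sum_congr rfl fun a _ => key a, ← Finset.sum_mul, hμsum, one_mul]
end
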